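/- arXiv:1507.05899 — 2 statements merged into one kernel-verified Lean document; each statement's English description precedes it below -/
import Mathlib

section
/- Let M, M̂ : A → ℝ be functions on a finite set A, with M̂(α) ≥ 0 for all α, and let p ≥ 0. Define the thresholded M̃ by M̃(α) = M̂(α) if M̂(α) ≥ τ and M̃(α) = 0 otherwise, where τ = p |A₊|^{-1} Σ_{α∈A₊} M̂(α) and A₊ = {α : M̂(α) > 0} is assumed nonempty. Then ‖M̃ − M‖_∞ ≤ (p+1) ‖M̂ − M‖_∞ + p |A₊|^{-1} Σ_{α∈A₊} M(α). -/
/-!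
Thresholding at level `τ ≥ 0` changes each nonnegative entry of `M̂` by at most `τ`, so
`‖M̃ - M‖_∞ ≤ ‖M̂ - M‖_∞ + τ`. And `τ` is `p` times the mean of `M̂` over `A₊`, which exceeds the
mean of `M` over `A₊` by at most `‖M̂ - M‖_∞`.
-/

open Finset

theorem abs_threshold_sub_le {x y t : ℝ} (hx : 0 ≤ x) (ht : 0 ≤ t) :
    |(if t ≤ x then x else 0) - y| ≤ |x - y| + t := by
  split_ifs with h
  · linarith
  · calc |0 - y| = |(x - y) - x| := by ring_nf
      _ ≤ |x - y| + |x| := abs_sub _ _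
      _ ≤ |x - y| + t := by rw [abs_of_nonneg hx]; linarith

theorem inv_card_mul_sum_le_add {ι : Type*} {s : Finset ι} (hs : s.Nonempty) {f g : ι → ℝ}
    {c : ℝ} (h : ∀ i ∈ s, f i ≤ g i + c) :
    (#s : ℝ)⁻¹ * ∑ i ∈ s, f i ≤ (#s : ℝ)⁻¹ * ∑ i ∈ s, g i + c := by
  have hcard : (0 : ℝ) < #s := by exact_mod_cast hs.card_pos
  have hsum : ∑ i ∈ s, f i ≤ ∑ i ∈ s, g i + #s * c := by
    simpa only [sum_add_distrib, sum_const, nsmul_eq_mul] using sum_le_sum h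
  calc (#s : ℝ)⁻¹ * ∑ i ∈ s, f i ≤ (#s : ℝ)⁻¹ * (∑ i ∈ s, g i + #s * c) := by gcongr
    _ = (#s : ℝ)⁻¹ * ∑ i ∈ s, g i + c := by field_simp

theorem stmt13_general {A : Type*} [Fintype A] [Nonempty A] (M Mh : A → ℝ)
    (hMh : ∀ a, 0 ≤ Mh a) (p : ℝ) (hp : 0 ≤ p)
    (Ap : Finset A) (hne : Ap.Nonempty)
    (τ : ℝ) (hτ : τ = p * (Ap.card : ℝ)⁻¹ * ∑ a ∈ Ap, Mh a)
    (Mt : A → ℝ) (hMt : ∀ a, Mt a = if τ ≤ Mh a then Mh a else 0) :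
    Finset.univ.sup' Finset.univ_nonempty (fun a => |Mt a - M a|) ≤
      (p + 1) * Finset.univ.sup' Finset.univ_nonempty (fun a => |Mh a - M a|) +
        p * (Ap.card : ℝ)⁻¹ * ∑ a ∈ Ap, M a := by
  set S := univ.sup' univ_nonempty (fun a => |Mh a - M a|)
  have hS (a : A) : |Mh a - M a| ≤ S := le_sup' (fun a => |Mh a - M a|) (mem_univ a)
  have hτ_nonneg : 0 ≤ τ := hτ ▸ mul_nonneg (by positivity) (sum_nonneg fun a _ => hMh a)
  have hτ_le : τ ≤ p * S + p * (#Ap : ℝ)⁻¹ * ∑ a ∈ Ap, M a :=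
    calc τ = p * ((#Ap : ℝ)⁻¹ * ∑ a ∈ Ap, Mh a) := by rw [hτ, mul_assoc]
      _ ≤ p * ((#Ap : ℝ)⁻¹ * ∑ a ∈ Ap, M a + S) := by
        gcongr
        exact inv_card_mul_sum_le_add hne fun a _ => by linarith [(abs_le.mp (hS a)).2]
      _ = p * S + p * (#Ap : ℝ)⁻¹ * ∑ a ∈ Ap, M a := by ring
  refine sup'_le _ _ fun a _ => ?_
  calc |Mt a - M a| ≤ |Mh a - M a| + τ := hMt a ▸ abs_threshold_sub_le (hMh a) hτ_nonneg
    _ ≤ S + (p * S + p * (#Ap : ℝ)⁻¹ * ∑ a ∈ Ap, M a) := add_le_add (hS a) hτ_le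
    _ = (p + 1) * S + p * (#Ap : ℝ)⁻¹ * ∑ a ∈ Ap, M a := by ring

theorem stmt13 {A : Type*} [Fintype A] [Nonempty A] (M Mh : A → ℝ)
    (hM : ∀ a, 0 ≤ M a) (hMh : ∀ a, 0 ≤ Mh a) (p : ℝ) (hp : 0 ≤ p)
    (Ap : Finset A) (hAp : ∀ a, a ∈ Ap ↔ 0 < Mh a) (hne : Ap.Nonempty)
    (τ : ℝ) (hτ : τ = p * (Ap.card : ℝ)⁻¹ * ∑ a ∈ Ap, Mh a)
    (Mt : A → ℝ) (hMt : ∀ a, Mt a = if τ ≤ Mh a then Mh a else 0) :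
    Finset.univ.sup' Finset.univ_nonempty (fun a => |Mt a - M a|) ≤
      (p + 1) * Finset.univ.sup' Finset.univ_nonempty (fun a => |Mh a - M a|) +
        p * (Ap.card : ℝ)⁻¹ * ∑ a ∈ Ap, M a :=
  stmt13_general M Mh hMh p hp Ap hne τ hτ Mt hMt
end

section
/- Let Φ be a measure on S = {x ∈ [0,1]^d : ‖x‖_∞ = 1} which decomposes as Φ = Σ_{β, i₀∈β} Φ_{β,i₀} where each Φ_{β,i₀} is supported on the edge Ω_{β,i₀} and is absolutely continuous with density bounded by M_β with respect to the Lebesgue measure on that edge, and suppose Σ_{|β|≥2} M_β ≤ M. Then for every nonempty α ⊆ {1,…,d} and 0 < ε, ε' < 1/2, |Φ(Ω_α^{ε,ε'}) − Φ(Ω_α)| ≤ M |α|² ε + M d ε'. -/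
open MeasureTheory Set

/-- Sup-norm of a vector in `ℝ^d`. -/
noncomputable def supNorm {d : ℕ} [NeZero d] (v : Fin d → ℝ) : ℝ :=
  Finset.univ.sup' Finset.univ_nonempty v

/-- Positive orthant of the unit sphere for the sup-norm. -/
def sphereS {d : ℕ} [NeZero d] : Set (Fin d → ℝ) :=
  {x | (∀ j, 0 ≤ x j ∧ x j ≤ 1) ∧ supNorm x = 1}

/-- Sub-sphere `Ω_α`. -/
def omegaSet {d : ℕ} [NeZero d] (α : Finset (Fin d)) : Set (Fin d → ℝ) :=
  {x | x ∈ sphereS ∧ (∀ i ∈ α, 0 < x i) ∧ (∀ i ∉ α, x i = 0)}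

/-- Thickened sub-sphere `Ω_α^{ε,ε'}`. -/
def omegaThick {d : ℕ} [NeZero d] (α : Finset (Fin d)) (ε ε' : ℝ) : Set (Fin d → ℝ) :=
  {x | x ∈ sphereS ∧ (∀ i ∈ α, ε < x i) ∧ (∀ i ∉ α, x i ≤ ε')}

/-- Edge `Ω_{β,i₀}` of the sphere. -/
def edgeSet {d : ℕ} [NeZero d] (β : Finset (Fin d)) (i₀ : Fin d) : Set (Fin d → ℝ) :=
  {x | x ∈ sphereS ∧ x i₀ = 1 ∧ (∀ i ∈ β, i ≠ i₀ → 0 < x i ∧ x i < 1) ∧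
    (∀ i ∉ β, x i = 0)}

/-- Parametrization of the edge `Ω_{β,i₀}` by the free coordinates `β \ {i₀}`. -/
noncomputable def edgeEmb {d : ℕ} (β : Finset (Fin d)) (i₀ : Fin d)
    (y : {j : Fin d // j ∈ β.erase i₀} → ℝ) : Fin d → ℝ :=
  fun j => if j = i₀ then 1 else if h : j ∈ β.erase i₀ then y ⟨j, h⟩ else 0

/-- Lebesgue measure on the edge `Ω_{β,i₀}` (pushforward of the product Lebesgue
measure on the free coordinates `β \ {i₀}`). -/
noncomputable def edgeLebesgue {d : ℕ} (β : Finset (Fin d)) (i₀ : Fin d) :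
    Measure (Fin d → ℝ) :=
  Measure.map (edgeEmb β i₀) volume

/-! Each `Φ_{β,i₀}` lives on its edge. An edge meets `Ω_α^{ε,ε'}` only if `α ⊆ β` and `i₀ ∈ α`;
for `β ≠ α` it then does so inside the slab `{x_k ≤ ε'}` of some `k ∈ β \ α`, which has edge
measure `ε'`. Only the edges of `α` itself meet `Ω_α`, and the points of such an edge outside
`Ω_α^{ε,ε'}` lie in the `|α| - 1` slabs `{x_k ≤ ε}`, `k ∈ α \ {i₀}`. Summing the density bounds
over the edges gives the two error terms. -/

lemma measure_le_of_inter_subset {X : Type*} [MeasurableSpace X] {μ : Measure X}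
    {E A B : Set X} (hE : μ Eᶜ = 0) (h : A ∩ E ⊆ B) : μ A ≤ μ B :=
  (measure_inter_conull hE).symm.le.trans (measure_mono h)

section EdgeLebesgue

variable {d : ℕ} {β : Finset (Fin d)} {i₀ k : Fin d}

lemma measurable_edgeEmb (β : Finset (Fin d)) (i₀ : Fin d) : Measurable (edgeEmb β i₀) := by
  refine measurable_pi_lambda _ fun j => ?_
  unfold edgeEmb
  split_ifs
  · exact measurable_const
  · exact measurable_pi_apply _
  · exact measurable_const

lemma edgeEmb_apply_of_mem {j : Fin d} (hj : j ∈ β.erase i₀) (y : β.erase i₀ → ℝ) :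
    edgeEmb β i₀ y j = y ⟨j, hj⟩ := by
  simp [edgeEmb, Finset.ne_of_mem_erase hj, hj]

lemma edgeEmb_preimage_pi (t : Fin d → Set ℝ) :
    edgeEmb β i₀ ⁻¹' (β.erase i₀ : Set (Fin d)).pi t = univ.pi fun j : β.erase i₀ => t j := by
  ext y
  simp only [mem_preimage, mem_pi, mem_univ, true_implies, Finset.mem_coe]
  exact ⟨fun h j => edgeEmb_apply_of_mem j.2 y ▸ h j j.2,
    fun h j hj => (edgeEmb_apply_of_mem hj y).symm ▸ h ⟨j, hj⟩⟩

lemma edgeLebesgue_pi {t : Fin d → Set ℝ} (ht : ∀ j, MeasurableSet (t j)) :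
    edgeLebesgue β i₀ ((β.erase i₀ : Set (Fin d)).pi t) = ∏ j : β.erase i₀, volume (t j) := by
  rw [edgeLebesgue, Measure.map_apply (measurable_edgeEmb β i₀)
    (MeasurableSet.pi (to_countable _) fun j _ => ht j), edgeEmb_preimage_pi, volume_pi_pi]

def edgeSlab (β : Finset (Fin d)) (i₀ k : Fin d) (c : ℝ) : Set (Fin d → ℝ) :=
  (β.erase i₀ : Set (Fin d)).pi fun j => Icc 0 (if j = k then c else 1)

lemma edgeLebesgue_edgeSlab (hk : k ∈ β.erase i₀) (c : ℝ) :
    edgeLebesgue β i₀ (edgeSlab β i₀ k c) = ENNReal.ofReal c := by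
  rw [edgeSlab, edgeLebesgue_pi fun _ => measurableSet_Icc,
    Finset.prod_eq_single ⟨k, hk⟩ (fun j _ hj => ?_) (by simp)]
  · simp
  · rw [if_neg fun h => hj (Subtype.ext h)]
    simp

lemma measure_edgeSlab_le {μ : Measure (Fin d → ℝ)} {m : ℝ}
    (hμ : μ ≤ ENNReal.ofReal m • edgeLebesgue β i₀) (hk : k ∈ β.erase i₀) (c : ℝ) :
    μ (edgeSlab β i₀ k c) ≤ ENNReal.ofReal m * ENNReal.ofReal c := by
  simpa [edgeLebesgue_edgeSlab hk] using hμ (edgeSlab β i₀ k c)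

end EdgeLebesgue

section Geometry

variable {d : ℕ} [NeZero d] {α β : Finset (Fin d)} {i₀ k : Fin d} {ε ε' : ℝ}

lemma edgeSet_subset_omegaSet (β : Finset (Fin d)) (i₀ : Fin d) :
    edgeSet β i₀ ⊆ omegaSet β := by
  rintro x ⟨hS, h1, hpos, hzero⟩
  refine ⟨hS, fun i hi => ?_, hzero⟩
  rcases eq_or_ne i i₀ with rfl | hne
  · rw [h1]
    exact one_pos
  · exact (hpos i hi hne).1

lemma disjoint_omegaSet (h : α ≠ β) : Disjoint (omegaSet α) (omegaSet β) := by
  refine disjoint_left.2 fun x hα hβ => h (Finset.Subset.antisymm (fun i hi => ?_) fun i hi => ?_)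
  · by_contra hiβ
    linarith [hα.2.1 i hi, hβ.2.2 i hiβ]
  · by_contra hiα
    linarith [hβ.2.1 i hi, hα.2.2 i hiα]

lemma mem_edgeSlab_of_mem_sphereS {x : Fin d → ℝ} {c : ℝ} (hx : x ∈ sphereS) (hk : x k ≤ c) :
    x ∈ edgeSlab β i₀ k c := by
  intro j _
  refine ⟨(hx.1 j).1, ?_⟩
  split_ifs with hjk
  · exact hjk ▸ hk
  · exact (hx.1 j).2

lemma omegaThick_subset_edgeSlab (hk : k ∉ α) : omegaThick α ε ε' ⊆ edgeSlab β i₀ k ε' :=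
  fun _ hx => mem_edgeSlab_of_mem_sphereS hx.1 (hx.2.2 k hk)

lemma disjoint_omegaThick_edgeSet (hε : 0 ≤ ε) (hε' : ε' < 1) (h : ¬(α ⊆ β ∧ i₀ ∈ α)) :
    Disjoint (omegaThick α ε ε') (edgeSet β i₀) := by
  refine disjoint_left.2 fun x hT hE => h ⟨fun i hi => ?_, ?_⟩
  · by_contra hiβ
    linarith [hT.2.1 i hi, hE.2.2.2 i hiβ]
  · by_contra hi₀
    linarith [hT.2.2 i₀ hi₀, hE.2.1]

lemma edgeSet_subset_omegaThick_union (hε : ε < 1) (hε' : 0 ≤ ε') :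
    edgeSet α i₀ ⊆ omegaThick α ε ε' ∪ ⋃ k ∈ α.erase i₀, edgeSlab α i₀ k ε := by
  intro x hx
  by_cases hall : ∀ i ∈ α, ε < x i
  · exact Or.inl ⟨hx.1, hall, fun i hi => (hx.2.2.2 i hi).symm ▸ hε'⟩
  · push Not at hall
    obtain ⟨k, hkα, hk⟩ := hall
    have hki₀ : k ≠ i₀ := by
      rintro rfl
      linarith [hx.2.1]
    exact Or.inr (mem_iUnion₂.2 ⟨k, Finset.mem_erase.2 ⟨hki₀, hkα⟩,
      mem_edgeSlab_of_mem_sphereS hx.1 hk⟩)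

end Geometry

section EdgeMeasure

variable {d : ℕ} [NeZero d] {α β : Finset (Fin d)} {i₀ : Fin d} {ε ε' m : ℝ}
  {μ : Measure (Fin d → ℝ)}

lemma measure_omegaThick_le_of_edge (hE : μ (edgeSet β i₀)ᶜ = 0)
    (hμ : μ ≤ ENNReal.ofReal m • edgeLebesgue β i₀) (hε : 0 ≤ ε) (hε' : ε' < 1) :
    μ (omegaThick α ε ε') ≤
      μ (omegaSet α) + if 2 ≤ β.card then ENNReal.ofReal m * ENNReal.ofReal ε' else 0 := by
  by_cases hβα : β = α
  · subst hβα
    exact le_add_right (measure_le_of_inter_subset hE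
      (inter_subset_right.trans (edgeSet_subset_omegaSet β i₀)))
  by_cases h : α ⊆ β ∧ i₀ ∈ α
  · obtain ⟨k, hkβ, hkα⟩ := Finset.exists_of_ssubset (h.1.ssubset_of_ne (Ne.symm hβα))
    have hki₀ : k ≠ i₀ := fun hk => hkα (hk ▸ h.2)
    have hβ2 : 2 ≤ β.card := Finset.one_lt_card.2 ⟨k, hkβ, i₀, h.1 h.2, hki₀⟩
    rw [if_pos hβ2]
    calc μ (omegaThick α ε ε') ≤ μ (edgeSlab β i₀ k ε') :=
          measure_mono (omegaThick_subset_edgeSlab hkα)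
      _ ≤ ENNReal.ofReal m * ENNReal.ofReal ε' :=
          measure_edgeSlab_le hμ (Finset.mem_erase.2 ⟨hki₀, hkβ⟩) ε'
      _ ≤ _ := le_add_self
  · rw [measure_mono_null (disjoint_omegaThick_edgeSet hε hε' h).subset_compl_right hE]
    exact zero_le

lemma measure_omegaSet_eq_zero_of_edge (hE : μ (edgeSet β i₀)ᶜ = 0) (h : β ≠ α) :
    μ (omegaSet α) = 0 :=
  measure_mono_null ((disjoint_omegaSet h.symm).mono_right
    (edgeSet_subset_omegaSet β i₀)).subset_compl_right hE

lemma measure_omegaSet_le_of_edge (hE : μ (edgeSet α i₀)ᶜ = 0)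
    (hμ : μ ≤ ENNReal.ofReal m • edgeLebesgue α i₀) (hε : ε < 1) (hε' : 0 ≤ ε') :
    μ (omegaSet α) ≤
      μ (omegaThick α ε ε') + (α.erase i₀).card * (ENNReal.ofReal m * ENNReal.ofReal ε) :=
  calc μ (omegaSet α)
      ≤ μ (omegaThick α ε ε' ∪ ⋃ k ∈ α.erase i₀, edgeSlab α i₀ k ε) :=
        measure_le_of_inter_subset hE
          (inter_subset_right.trans (edgeSet_subset_omegaThick_union hε hε'))
    _ ≤ μ (omegaThick α ε ε') + ∑ k ∈ α.erase i₀, μ (edgeSlab α i₀ k ε) :=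
        (measure_union_le _ _).trans (add_le_add_right (measure_biUnion_finset_le _ _) _)
    _ ≤ _ := by
        gcongr
        simpa using Finset.sum_le_card_nsmul _ _ _ fun k hk => measure_edgeSlab_le hμ hk ε

end EdgeMeasure

section Decomposition

variable {d : ℕ} [NeZero d] {Φ : Measure (Fin d → ℝ)}
  {Φe : Finset (Fin d) → Fin d → Measure (Fin d → ℝ)} {Mb : Finset (Fin d) → ℝ} {M : ℝ}

lemma measure_omegaThick_le (hMb : ∀ β, 0 ≤ Mb β) (hM0 : 0 ≤ M)
    (hdecomp : Φ = ∑ β : Finset (Fin d), ∑ i₀ ∈ β, Φe β i₀)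
    (hsupp : ∀ β : Finset (Fin d), ∀ i₀ ∈ β, Φe β i₀ (edgeSet β i₀)ᶜ = 0)
    (hdens : ∀ β : Finset (Fin d), ∀ i₀ ∈ β,
      Φe β i₀ ≤ ENNReal.ofReal (Mb β) • edgeLebesgue β i₀)
    (hM : ∑ β ∈ Finset.univ.filter (fun β : Finset (Fin d) => 2 ≤ β.card), Mb β ≤ M)
    (α : Finset (Fin d)) (ε ε' : ℝ) (hε : 0 ≤ ε) (hε' : ε' < 1) :
    Φ (omegaThick α ε ε') ≤ Φ (omegaSet α) + ENNReal.ofReal (M * d * ε') := by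
  have happly (A : Set (Fin d → ℝ)) : Φ A = ∑ β, ∑ i₀ ∈ β, Φe β i₀ A := by
    simp [hdecomp, Measure.finsetSum_apply]
  set err : Finset (Fin d) → ENNReal := fun β =>
    if 2 ≤ β.card then ENNReal.ofReal (Mb β) * ENNReal.ofReal ε' else 0
  calc Φ (omegaThick α ε ε')
      ≤ ∑ β, ∑ i₀ ∈ β, (Φe β i₀ (omegaSet α) + err β) := by
        rw [happly]
        gcongr with β _ i₀ hi₀
        exact measure_omegaThick_le_of_edge (hsupp β i₀ hi₀) (hdens β i₀ hi₀) hε hε'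
    _ = Φ (omegaSet α) + ∑ β, β.card * err β := by
        simp [Finset.sum_add_distrib, happly]
    _ ≤ Φ (omegaSet α) + ∑ β, d * err β := by
        gcongr with β
        simpa using Finset.card_le_univ β
    _ = Φ (omegaSet α) + d * (ENNReal.ofReal (∑ β ∈ Finset.univ.filter
          (fun β : Finset (Fin d) => 2 ≤ β.card), Mb β) * ENNReal.ofReal ε') := by
        rw [ENNReal.ofReal_sum_of_nonneg fun β _ => hMb β, Finset.sum_mul, Finset.sum_filter,
          Finset.mul_sum]
    _ ≤ Φ (omegaSet α) + ENNReal.ofReal (M * d * ε') := by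
        rw [ENNReal.ofReal_mul (by positivity), ENNReal.ofReal_mul hM0, ENNReal.ofReal_natCast,
          mul_comm (ENNReal.ofReal M), mul_assoc]
        gcongr

lemma measure_omegaSet_le (hM0 : 0 ≤ M)
    (hdecomp : Φ = ∑ β : Finset (Fin d), ∑ i₀ ∈ β, Φe β i₀)
    (hsupp : ∀ β : Finset (Fin d), ∀ i₀ ∈ β, Φe β i₀ (edgeSet β i₀)ᶜ = 0)
    (hdens : ∀ β : Finset (Fin d), ∀ i₀ ∈ β,
      Φe β i₀ ≤ ENNReal.ofReal (Mb β) • edgeLebesgue β i₀)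
    (α : Finset (Fin d)) (hMα : Mb α ≤ M) (ε ε' : ℝ) (hε : ε < 1) (hε' : 0 ≤ ε') :
    Φ (omegaSet α) ≤ Φ (omegaThick α ε ε') + ENNReal.ofReal (M * α.card ^ 2 * ε) := by
  have happly (A : Set (Fin d → ℝ)) : Φ A = ∑ β, ∑ i₀ ∈ β, Φe β i₀ A := by
    simp [hdecomp, Measure.finsetSum_apply]
  have hedge : ∀ i₀ ∈ α, Φe α i₀ (omegaSet α) ≤ Φe α i₀ (omegaThick α ε ε') +
      α.card * (ENNReal.ofReal M * ENNReal.ofReal ε) := fun i₀ hi₀ => by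
    refine (measure_omegaSet_le_of_edge (hsupp α i₀ hi₀) (hdens α i₀ hi₀) hε hε').trans ?_
    gcongr
    exact Finset.erase_subset i₀ α
  calc Φ (omegaSet α)
      = ∑ i₀ ∈ α, Φe α i₀ (omegaSet α) := by
        rw [happly, Finset.sum_eq_single α (fun β _ hβ => Finset.sum_eq_zero fun i₀ hi₀ =>
          measure_omegaSet_eq_zero_of_edge (hsupp β i₀ hi₀) hβ) (by simp)]
    _ ≤ ∑ i₀ ∈ α, Φe α i₀ (omegaThick α ε ε') +
          α.card * (α.card * (ENNReal.ofReal M * ENNReal.ofReal ε)) := by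
        simpa [Finset.sum_add_distrib] using Finset.sum_le_sum hedge
    _ ≤ Φ (omegaThick α ε ε') + ENNReal.ofReal (M * α.card ^ 2 * ε) := by
        gcongr
        · rw [happly]
          exact Finset.single_le_sum (f := fun β => ∑ i₀ ∈ β, Φe β i₀ _)
            (fun _ _ => zero_le) (Finset.mem_univ α)
        · rw [ENNReal.ofReal_mul (by positivity), ENNReal.ofReal_mul hM0,
            ENNReal.ofReal_pow (Nat.cast_nonneg _), ENNReal.ofReal_natCast]
          exact le_of_eq (by ring)

end Decomposition

theorem stmt16_general {d : ℕ} [NeZero d] (Φ : Measure (Fin d → ℝ))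
    (Φe : Finset (Fin d) → Fin d → Measure (Fin d → ℝ))
    (Mb : Finset (Fin d) → ℝ) (M : ℝ) (hMb : ∀ β, 0 ≤ Mb β)
    (hdecomp : Φ = ∑ β : Finset (Fin d), ∑ i₀ ∈ β, Φe β i₀)
    (hsupp : ∀ β : Finset (Fin d), ∀ i₀ ∈ β, Φe β i₀ (edgeSet β i₀)ᶜ = 0)
    (hdens : ∀ β : Finset (Fin d), ∀ i₀ ∈ β,
      Φe β i₀ ≤ ENNReal.ofReal (Mb β) • edgeLebesgue β i₀)
    (hM : ∑ β ∈ Finset.univ.filter (fun β : Finset (Fin d) => 2 ≤ β.card), Mb β ≤ M)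
    (α : Finset (Fin d)) (hMα : Mb α ≤ M)
    (ε ε' : ℝ) (hε : 0 < ε) (hε2 : ε < 1 / 2) (hε' : 0 < ε') (hε'2 : ε' < 1 / 2) :
    Φ (omegaThick α ε ε') ≤
        Φ (omegaSet α) + ENNReal.ofReal (M * (α.card : ℝ) ^ 2 * ε + M * d * ε') ∧
    Φ (omegaSet α) ≤
        Φ (omegaThick α ε ε') + ENNReal.ofReal (M * (α.card : ℝ) ^ 2 * ε + M * d * ε') := by
  have hM0 : 0 ≤ M := (hMb α).trans hMα
  rw [ENNReal.ofReal_add (by positivity) (by positivity)]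
  constructor
  · refine (measure_omegaThick_le hMb hM0 hdecomp hsupp hdens hM α ε ε' hε.le
      (by linarith)).trans ?_
    gcongr
    exact le_add_self
  · refine (measure_omegaSet_le hM0 hdecomp hsupp hdens α hMα ε ε' (by linarith) hε'.le).trans ?_
    gcongr
    exact le_self_add

theorem stmt16 {d : ℕ} [NeZero d] (Φ : Measure (Fin d → ℝ))
    (Φe : Finset (Fin d) → Fin d → Measure (Fin d → ℝ))
    (Mb : Finset (Fin d) → ℝ) (M : ℝ) (hMb : ∀ β, 0 ≤ Mb β)
    (hdecomp : Φ = ∑ β : Finset (Fin d), ∑ i₀ ∈ β, Φe β i₀)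
    (hsupp : ∀ β : Finset (Fin d), ∀ i₀ ∈ β, Φe β i₀ (edgeSet β i₀)ᶜ = 0)
    (hdens : ∀ β : Finset (Fin d), ∀ i₀ ∈ β,
      Φe β i₀ ≤ ENNReal.ofReal (Mb β) • edgeLebesgue β i₀)
    (hM : ∑ β ∈ Finset.univ.filter (fun β : Finset (Fin d) => 2 ≤ β.card), Mb β ≤ M)
    (α : Finset (Fin d)) (hα : α.Nonempty) (hMα : Mb α ≤ M)
    (ε ε' : ℝ) (hε : 0 < ε) (hε2 : ε < 1 / 2) (hε' : 0 < ε') (hε'2 : ε' < 1 / 2) :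
    Φ (omegaThick α ε ε') ≤
        Φ (omegaSet α) + ENNReal.ofReal (M * (α.card : ℝ) ^ 2 * ε + M * d * ε') ∧
    Φ (omegaSet α) ≤
        Φ (omegaThick α ε ε') + ENNReal.ofReal (M * (α.card : ℝ) ^ 2 * ε + M * d * ε') :=
  stmt16_general Φ Φe Mb M hMb hdecomp hsupp hdens hM α hMα ε ε' hε hε2 hε' hε'2
end
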